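/- In the hexagon chain graph with k hexagons, the number of near-perfect matchings leaving exactly the two end vertices u and v unmatched equals 2^k. -/

import Mathlib

/-- Adjacency generating relation of the hexagon chain graph with `k` hexagons:
hexagon `i` is the 6-cycle on `(i, 0), …, (i, 5)`; consecutive hexagons are joined
by the single edge `(i,3)–(i+1,0)`; the extra vertex `u = inl 0` is attached to
`(0,0)` and `v = inl 1` is attached to `(k-1, 3)`. -/
def hexRel (k : ℕ) : Sum (Fin 2) (Fin k × Fin 6) → Sum (Fin 2) (Fin k × Fin 6) → Prop
  | Sum.inl a, Sum.inr p =>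
      (a = 0 ∧ (p.1 : ℕ) = 0 ∧ (p.2 : ℕ) = 0) ∨
      (a = 1 ∧ (p.1 : ℕ) = k - 1 ∧ (p.2 : ℕ) = 3)
  | Sum.inr p, Sum.inr q =>
      (p.1 = q.1 ∧ q.2 = p.2 + 1) ∨
      ((p.1 : ℕ) + 1 = (q.1 : ℕ) ∧ (p.2 : ℕ) = 3 ∧ (q.2 : ℕ) = 0)
  | _, _ => False

/-- The hexagon chain graph with `k` hexagons, on `6k + 2` vertices. -/
def hexGraph (k : ℕ) : SimpleGraph (Sum (Fin 2) (Fin k × Fin 6)) :=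
  SimpleGraph.fromRel (hexRel k)

/-!
A near-perfect matching `M` missing only `u` and `v` must match vertex `0` of the first hexagon
inside that hexagon, since its third neighbour `u` is uncovered. Inside a hexagon, each vertex
other than `0` and `3` has just two neighbours, so once vertex `0` is matched inside, the whole
hexagon is matched by one of its two perfect matchings; in particular vertex `3` is matched inside,
so the bridge to the next hexagon is unused and the argument propagates along the chain. Hence the
matchings are exactly the `2 ^ k` independent choices of one perfect matching per hexagon.
-/

namespace SimpleGraph.Subgraph.IsMatching

variable {V : Type*} {G : SimpleGraph V} {M : G.Subgraph}

lemma adj_of_neighborSet_subset_pair (hM : M.IsMatching) {a b c : V} (hb : b ∈ M.verts)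
    (hnb : G.neighborSet b ⊆ {a, c}) (hab : ¬M.Adj a b) : M.Adj b c := by
  obtain ⟨y, hby, -⟩ := hM hb
  rcases hnb (M.adj_sub hby) with rfl | rfl
  · exact absurd hby.symm hab
  · exact hby

end SimpleGraph.Subgraph.IsMatching

open Sum

section Graph

variable {k : ℕ}

lemma hexGraph_adj_inr_add_one (i : Fin k) (j : Fin 6) :
    (hexGraph k).Adj (inr (i, j)) (inr (i, j + 1)) := by
  simp [hexGraph, hexRel]

lemma hexGraph_neighborSet_inr_subset {i : Fin k} {j : Fin 6} (h0 : j ≠ 0) (h3 : j ≠ 3) :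
    (hexGraph k).neighborSet (inr (i, j)) ⊆ {inr (i, j - 1), inr (i, j + 1)} := by
  rintro (a | ⟨i', j'⟩) h <;> simp only [SimpleGraph.mem_neighborSet, hexGraph,
    SimpleGraph.fromRel_adj, hexRel] at h ⊢ <;> grind

lemma hexGraph_adj_inr_zero {i : Fin k} {y} (h : (hexGraph k).Adj (inr (i, 0)) y) :
    y = inl 0 ∨ y = inr (i, 1) ∨ y = inr (i, 5) ∨
      ∃ i' : Fin k, (i' : ℕ) + 1 = i ∧ y = inr (i', 3) := by
  rcases y with a | ⟨i', j'⟩ <;>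
    simp only [hexGraph, SimpleGraph.fromRel_adj, hexRel] at h <;> grind

end Graph

/-- The partner of vertex `j` of a hexagon in its perfect matching selected by `c`:
`false` pairs `{0,1}, {2,3}, {4,5}` and `true` pairs `{1,2}, {3,4}, {5,0}`. -/
def hexPartner (c : Bool) (j : Fin 6) : Fin 6 :=
  if j.val % 2 = (if c then 1 else 0) then j + 1 else j - 1

lemma hexPartner_hexPartner : ∀ (c : Bool) (j : Fin 6), hexPartner c (hexPartner c j) = j := by
  decide

lemma hexPartner_eq_add_one_or : ∀ (c : Bool) (j : Fin 6),
    hexPartner c j = j + 1 ∨ hexPartner c j + 1 = j := by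
  decide

lemma hexPartner_zero_injective : Function.Injective (hexPartner · 0) := by
  decide

lemma hexPartner_three_ne_zero : ∀ c : Bool, hexPartner c 3 ≠ 0 := by
  decide

lemma hexGraph_adj_hexPartner {k : ℕ} (c : Bool) (i : Fin k) (j : Fin 6) :
    (hexGraph k).Adj (inr (i, j)) (inr (i, hexPartner c j)) := by
  rcases hexPartner_eq_add_one_or c j with h | h
  · exact h ▸ hexGraph_adj_inr_add_one i j
  · exact (h ▸ hexGraph_adj_inr_add_one i (hexPartner c j)).symm

def hexMatch (k : ℕ) (b : Fin k → Bool) : (hexGraph k).Subgraph where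
  verts := {x | x ≠ inl 0 ∧ x ≠ inl 1}
  Adj x y := ∃ p : Fin k × Fin 6, x = inr p ∧ y = inr (p.1, hexPartner (b p.1) p.2)
  adj_sub := by
    rintro x y ⟨p, rfl, rfl⟩
    exact hexGraph_adj_hexPartner _ _ _
  edge_vert := by
    rintro x y ⟨p, rfl, rfl⟩
    simp
  symm := ⟨by
    rintro x y ⟨p, rfl, rfl⟩
    exact ⟨(p.1, hexPartner (b p.1) p.2), rfl, by simp [hexPartner_hexPartner]⟩⟩

lemma hexMatch_isMatching (k : ℕ) (b : Fin k → Bool) : (hexMatch k b).IsMatching := by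
  rintro (a | p) hv
  · fin_cases a <;> simp [hexMatch] at hv
  · refine ⟨inr (p.1, hexPartner (b p.1) p.2), ⟨p, rfl, rfl⟩, ?_⟩
    rintro y ⟨q, hq, rfl⟩
    cases hq
    rfl

lemma hexMatch_injective (k : ℕ) : Function.Injective (hexMatch k) := by
  intro b b' h
  funext i
  have hadj : (hexMatch k b').Adj (inr (i, 0)) (inr (i, hexPartner (b i) 0)) :=
    h ▸ ⟨(i, 0), rfl, rfl⟩
  obtain ⟨p, hp, hq⟩ := hadj
  cases hp
  simp only [inr.injEq, Prod.mk.injEq, true_and] at hq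
  exact hexPartner_zero_injective hq

section Classification

variable {k : ℕ} {M : (hexGraph k).Subgraph}

lemma exists_hexPartner_of_adj_zero (hM : M.IsMatching) (hcov : ∀ p, inr p ∈ M.verts)
    (i : Fin k) (h0 : M.Adj (inr (i, 0)) (inr (i, 1)) ∨ M.Adj (inr (i, 0)) (inr (i, 5))) :
    ∃ c, ∀ j, M.Adj (inr (i, j)) (inr (i, hexPartner c j)) := by
  have forced := fun (j : Fin 6) (h0 : j ≠ 0) (h3 : j ≠ 3) =>
    hM.adj_of_neighborSet_subset_pair (hcov (i, j)) (hexGraph_neighborSet_inr_subset h0 h3)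
  have forced' := fun (j : Fin 6) (h0 : j ≠ 0) (h3 : j ≠ 3) =>
    hM.adj_of_neighborSet_subset_pair (hcov (i, j))
      ((hexGraph_neighborSet_inr_subset h0 h3).trans (Set.pair_comm _ _).subset)
  rcases h0 with h01 | h05
  · have h23 := forced 2 (by decide) (by decide) (hM.not_adj_left_of_ne (by simp) h01.symm)
    have h45 := forced 4 (by decide) (by decide) (hM.not_adj_left_of_ne (by simp) h23.symm)
    refine ⟨false, fun j => ?_⟩
    fin_cases j
    exacts [h01, h01.symm, h23, h23.symm, h45, h45.symm]
  · have h43 := (forced' 4 (by decide) (by decide)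
      (hM.not_adj_left_of_ne (by simp) h05.symm)).symm
    have h12 := forced 1 (by decide) (by decide) (hM.not_adj_left_of_ne (by simp) h05)
    refine ⟨true, fun j => ?_⟩
    fin_cases j
    exacts [h05, h12, h12.symm, h43, h43.symm, h05.symm]

lemma exists_hexPartner (hM : M.IsMatching) (hcov : ∀ p, inr p ∈ M.verts)
    (hu : inl 0 ∉ M.verts) (i : Fin k) :
    ∃ c, ∀ j, M.Adj (inr (i, j)) (inr (i, hexPartner c j)) := by
  induction i using WellFoundedLT.induction with
  | _ i ih =>
    apply exists_hexPartner_of_adj_zero hM hcov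
    obtain ⟨y, hy, -⟩ := hM (hcov (i, 0))
    rcases hexGraph_adj_inr_zero (M.adj_sub hy) with rfl | rfl | rfl | ⟨i', hi', rfl⟩
    · exact absurd (M.edge_vert hy.symm) hu
    · exact Or.inl hy
    · exact Or.inr hy
    · obtain ⟨c, hc⟩ := ih i' (by omega)
      have h30 := hM.eq_of_adj_left hy.symm (hc 3)
      simp only [inr.injEq, Prod.mk.injEq] at h30
      exact absurd h30.2.symm (hexPartner_three_ne_zero c)

lemma exists_hexMatch_eq (hM : M.IsMatching)
    (hv : M.verts = {x | x ≠ inl 0 ∧ x ≠ inl 1}) : ∃ b, hexMatch k b = M := by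
  choose b hb using exists_hexPartner hM (by simp [hv]) (by simp [hv])
  refine ⟨b, SimpleGraph.Subgraph.ext hv.symm ?_⟩
  ext x y
  constructor
  · rintro ⟨p, rfl, rfl⟩
    exact hb p.1 p.2
  · intro hxy
    obtain ⟨p, rfl⟩ : ∃ p, x = inr p := by
      have hx := M.edge_vert hxy
      rcases x with a | p
      · fin_cases a <;> simp [hv] at hx
      · exact ⟨p, rfl⟩
    exact ⟨p, rfl, hM.eq_of_adj_left hxy (hb p.1 p.2)⟩

end Classification

theorem hexGraph_near_perfect_count_general (k : ℕ) :
    Set.ncard {M : (hexGraph k).Subgraph |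
      M.IsMatching ∧ M.verts = {x | x ≠ Sum.inl 0 ∧ x ≠ Sum.inl 1}} = 2 ^ k := by
  have hrange : {M : (hexGraph k).Subgraph |
      M.IsMatching ∧ M.verts = {x | x ≠ Sum.inl 0 ∧ x ≠ Sum.inl 1}} = Set.range (hexMatch k) := by
    ext M
    constructor
    · rintro ⟨hM, hv⟩
      exact exists_hexMatch_eq hM hv
    · rintro ⟨b, rfl⟩
      exact ⟨hexMatch_isMatching k b, rfl⟩
  rw [hrange, Set.ncard_range_of_injective (hexMatch_injective k)]
  simp

/-- In the hexagon chain graph with `k` hexagons, the number of near-perfect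
matchings leaving exactly the two end vertices `u = inl 0` and `v = inl 1`
unmatched equals `2^k`. -/
theorem hexGraph_near_perfect_count (k : ℕ) (hk : 1 ≤ k) :
    Set.ncard {M : (hexGraph k).Subgraph |
      M.IsMatching ∧ M.verts = {x | x ≠ Sum.inl 0 ∧ x ≠ Sum.inl 1}} = 2 ^ k :=
  hexGraph_near_perfect_count_general k
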